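/- arXiv:1902.11164 — 2 statements merged into one kernel-verified Lean document; each statement's English description precedes it below -/
import Mathlib

section
/- Suppose P(x) = ((⋯(x^2 - c_1)^2 ⋯)^2 - c_k ∈ ℤ[x] splits into linear factors over ℤ and c_k ≠ 0. Then c_j > 0 for every j with 1 ≤ j ≤ k, and moreover c_j ≥ c_k^(1/2^(k-j)), i.e. c_j^(2^(k-j)) ≥ c_k. -/
open Polynomial

noncomputable def chain (c : ℕ → ℤ) : ℕ → Polynomial ℤ
  | 0 => X
  | j + 1 => (chain c j) ^ 2 - C (c (j + 1))

def Crumbles (P : Polynomial ℤ) : Prop :=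
  ∃ s : Multiset (Polynomial ℤ), (∀ q ∈ s, q.degree = 1) ∧ P = s.prod

/-!
If `P = Q² - a` splits over `ℤ` with `deg Q > 0`, then evaluating at an integer root shows
`a = M²`, and both factors `Q ∓ M` split. When `Q = chain c (n + 1)`, the factor
`Q + M = chain c n ² - (c (n + 1) - M)` forces `c (n + 1) - M` to be a square, hence `M ≤ c (n + 1)`,
while `Q - M = chain c n ² - (c (n + 1) + M)` is a shorter split chain with nonzero last constant,
to which induction applies; `a = M² ≤ (c (n + 1) + M)²` propagates the bounds.
-/

theorem Crumbles.splits {P : ℤ[X]} (hcr : Crumbles P) (hP : P.Monic) : P.Splits := by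
  obtain ⟨s, hdeg, rfl⟩ := hcr
  refine Splits.multisetProd fun q hq => ?_
  have hunit : IsUnit q.leadingCoeff := by
    refine isUnit_of_dvd_one ?_
    rw [← hP.leadingCoeff, leadingCoeff_multiset_prod]
    exact Multiset.dvd_prod (Multiset.mem_map_of_mem _ hq)
  exact .of_degree_le_one_of_invertible (hdeg q hq).le hunit.invertible

namespace Polynomial

variable {R : Type*} [CommRing R] [IsDomain R] {P : R[X]}

theorem Splits.isSquare_of_sq_sub_C (hP : 0 < P.degree) {a : R} (h : (P ^ 2 - C a).Splits) :
    IsSquare a := by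
  have hdeg : 0 < (P ^ 2).degree := by
    rw [degree_pow]
    exact nsmul_pos hP two_ne_zero
  obtain ⟨x, hx⟩ := h.exists_eval_eq_zero (degree_sub_C hdeg ▸ hdeg.ne')
  exact ⟨P.eval x, by simp only [eval_sub, eval_pow, eval_C] at hx; linear_combination -hx⟩

theorem Splits.add_C_of_sq_sub_C (hP : 0 < P.degree) {r : R} (h : (P ^ 2 - C (r * r)).Splits) :
    (P + C r).Splits := by
  have hne : ∀ s : R, P + C s ≠ 0 := fun s =>
    ne_zero_of_degree_gt ((degree_add_C hP).symm ▸ hP : (0 : WithBot ℕ) < (P + C s).degree)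
  have hfactor : P ^ 2 - C (r * r) = (P + C r) * (P + C (-r)) := by
    rw [C_mul, C_neg]; ring
  rw [hfactor] at h
  exact ((splits_mul (hne r) (hne (-r))).mp h).1

end Polynomial

theorem chain_succ (c : ℕ → ℤ) (n : ℕ) : chain c (n + 1) = chain c n ^ 2 - C (c (n + 1)) := rfl

theorem chain_monic_and_natDegree (c : ℕ → ℤ) (n : ℕ) :
    (chain c n).Monic ∧ (chain c n).natDegree = 2 ^ n := by
  induction n with
  | zero => exact ⟨monic_X, natDegree_X⟩
  | succ n ih =>
    have hpos : 0 < (chain c n ^ 2).natDegree := by rw [natDegree_pow, ih.2]; positivity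
    rw [chain_succ, sub_eq_add_neg, ← C_neg]
    refine ⟨(ih.1.pow 2).add_of_left ?_, ?_⟩
    · exact degree_C_le.trans_lt (natDegree_pos_iff_degree_pos.mp hpos)
    · rw [natDegree_add_C, natDegree_pow, ih.2, pow_succ, mul_comm]

theorem chain_monic (c : ℕ → ℤ) (n : ℕ) : (chain c n).Monic :=
  (chain_monic_and_natDegree c n).1

theorem degree_chain_pos (c : ℕ → ℤ) (n : ℕ) : 0 < (chain c n).degree :=
  natDegree_pos_iff_degree_pos.mp ((chain_monic_and_natDegree c n).2 ▸ by positivity)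

theorem exists_of_splits_chain_sq_sub_C {c : ℕ → ℤ} {n : ℕ} {a : ℤ}
    (h : (chain c (n + 1) ^ 2 - C a).Splits) (ha : a ≠ 0) :
    ∃ M, 0 < M ∧ a = M * M ∧ M ≤ c (n + 1) ∧ (chain c n ^ 2 - C (c (n + 1) + M)).Splits := by
  obtain ⟨r, rfl⟩ := h.isSquare_of_sq_sub_C (degree_chain_pos c (n + 1))
  set M := |r|
  have hM : r * r = M * M := (abs_mul_abs_self r).symm
  rw [hM] at h
  have hminus : (chain c (n + 1) + C (-M)).Splits :=
    Splits.add_C_of_sq_sub_C (degree_chain_pos c _) (by rwa [neg_mul_neg])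
  have hplus : (chain c (n + 1) + C M).Splits := h.add_C_of_sq_sub_C (degree_chain_pos c _)
  have hsq : IsSquare (c (n + 1) - M) := by
    refine Splits.isSquare_of_sq_sub_C (degree_chain_pos c n) ?_
    rwa [show chain c (n + 1) + C M = chain c n ^ 2 - C (c (n + 1) - M) by
      rw [chain_succ, C_sub]; ring] at hplus
  refine ⟨M, abs_pos.mpr fun hr => ha (by simp [hr]), hM, sub_nonneg.mp hsq.nonneg, ?_⟩
  rwa [show chain c (n + 1) + C (-M) = chain c n ^ 2 - C (c (n + 1) + M) by
    rw [chain_succ, C_add, C_neg]; ring] at hminus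

theorem chain_sq_sub_C_bounds_of_splits (c : ℕ → ℤ) (n : ℕ) {a : ℤ}
    (h : (chain c n ^ 2 - C a).Splits) (ha : a ≠ 0) :
    0 < a ∧ ∀ j, 1 ≤ j → j ≤ n → 0 < c j ∧ a ≤ c j ^ 2 ^ (n + 1 - j) := by
  induction n generalizing a with
  | zero =>
    exact ⟨(h.isSquare_of_sq_sub_C (degree_chain_pos c 0)).nonneg.lt_of_ne' ha,
      fun j hj1 hj0 => absurd hj0 (by omega)⟩
  | succ n ih =>
    obtain ⟨M, hM, rfl, hMc, hsplit⟩ := exists_of_splits_chain_sq_sub_C h ha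
    have hMsq : M * M ≤ (c (n + 1) + M) ^ 2 := by nlinarith
    obtain ⟨-, hbound⟩ := ih hsplit (by omega)
    refine ⟨mul_pos hM hM, fun j hj1 hjn => ?_⟩
    rcases Nat.lt_or_ge j (n + 1) with hjn' | hjn'
    · obtain ⟨hcj, hle⟩ := hbound j hj1 (by omega)
      refine ⟨hcj, hMsq.trans ?_⟩
      rw [show n + 1 + 1 - j = n + 1 - j + 1 by omega, pow_succ 2, pow_mul]
      exact pow_le_pow_left₀ (by omega) hle 2
    · obtain rfl : j = n + 1 := by omega
      refine ⟨by omega, ?_⟩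
      rw [show n + 1 + 1 - (n + 1) = 1 by omega, pow_one]
      nlinarith

theorem stmt_5 (k : ℕ) (c : ℕ → ℤ) (hcr : Crumbles (chain c k)) (hck : c k ≠ 0) :
    ∀ j, 1 ≤ j → j ≤ k → 0 < c j ∧ c k ≤ c j ^ 2 ^ (k - j) := by
  intro j hj1 hjk
  obtain _ | n := k
  · omega
  obtain ⟨hpos, hbound⟩ :=
    chain_sq_sub_C_bounds_of_splits c n (hcr.splits (chain_monic c (n + 1))) hck
  rcases Nat.lt_or_ge j (n + 1) with hjn | hjn
  · exact hbound j hj1 (by omega)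
  · obtain rfl : j = n + 1 := by omega
    simpa using hpos
end

section
/- Suppose P(x) = ((⋯(x^2 - c_1)^2 ⋯)^2 - c_k ∈ ℤ[x] splits into linear factors over ℤ. If p is a prime with p ≡ 3 (mod 4) and p ≤ 2^(j-1), then the p-adic valuation of c_j satisfies ν_p(c_j) ≥ 2^(j - ⌈log_2 p⌉). -/
open Polynomial

/-- Splits into monic linear factors over ℤ. -/
def SplA (P : Polynomial ℤ) : Prop :=
  ∃ R : Multiset ℤ, P = (R.map fun r => X - C r).prod

lemma monic_prodXsubC (R : Multiset ℤ) : ((R.map fun r => (X : Polynomial ℤ) - C r).prod).Monic :=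
  monic_multiset_prod_of_monic _ _ (fun r _ => monic_X_sub_C r)

lemma natDegree_prodXsubC (R : Multiset ℤ) :
    ((R.map fun r => (X : Polynomial ℤ) - C r).prod).natDegree = Multiset.card R := by
  induction R using Multiset.induction with
  | empty => simp
  | cons a R ih =>
    simp only [Multiset.map_cons, Multiset.prod_cons]
    rw [(monic_X_sub_C a).natDegree_mul (monic_prodXsubC R), ih, natDegree_X_sub_C,
      Multiset.card_cons]
    omega

lemma splA_mul : ∀ (R : Multiset ℤ) (P Q : Polynomial ℤ), P.Monic → Q.Monic →
    P * Q = (R.map fun r => X - C r).prod → SplA P ∧ SplA Q := by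
  intro R
  induction R using Multiset.induction with
  | empty =>
    intro P Q hP hQ h
    simp only [Multiset.map_zero, Multiset.prod_zero] at h
    have hPu : IsUnit P := IsUnit.of_mul_eq_one _ h
    have hQu : IsUnit Q := IsUnit.of_mul_eq_one _ (by rw [mul_comm]; exact h)
    exact ⟨⟨0, by simp [hP.eq_one_of_isUnit hPu]⟩, ⟨0, by simp [hQ.eq_one_of_isUnit hQu]⟩⟩
  | cons a R ih =>
    intro P Q hP hQ h
    simp only [Multiset.map_cons, Multiset.prod_cons] at h
    have hdvd : (X - C a) ∣ P * Q := ⟨_, h⟩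
    rcases (prime_X_sub_C a).2.2 _ _ hdvd with hcase | hcase
    · obtain ⟨P', hP'⟩ := hcase
      have hP'm : P'.Monic := (monic_X_sub_C a).of_mul_monic_left (by rwa [← hP'])
      have hcan : P' * Q = (R.map fun r => X - C r).prod := by
        apply mul_left_cancel₀ (X_sub_C_ne_zero a)
        rw [← mul_assoc, ← hP', h]
      obtain ⟨h1, h2⟩ := ih P' Q hP'm hQ hcan
      obtain ⟨S, hS⟩ := h1
      exact ⟨⟨a ::ₘ S, by simp [hP', hS]⟩, h2⟩
    · obtain ⟨Q', hQ'⟩ := hcase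
      have hQ'm : Q'.Monic := (monic_X_sub_C a).of_mul_monic_left (by rwa [← hQ'])
      have hcan : P * Q' = (R.map fun r => X - C r).prod := by
        apply mul_left_cancel₀ (X_sub_C_ne_zero a)
        rw [show (X - C a) * (P * Q') = P * ((X - C a) * Q') by ring, ← hQ', h]
      obtain ⟨h1, h2⟩ := ih P Q' hP hQ'm hcan
      obtain ⟨S, hS⟩ := h2
      exact ⟨h1, ⟨a ::ₘ S, by simp [hQ', hS]⟩⟩

lemma splA_of_mul_left {P Q : Polynomial ℤ} (hP : P.Monic) (hQ : Q.Monic)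
    (h : SplA (P * Q)) : SplA P := by
  obtain ⟨R, hR⟩ := h
  exact (splA_mul R P Q hP hQ hR).1

lemma splA_of_mul_right {P Q : Polynomial ℤ} (hP : P.Monic) (hQ : Q.Monic)
    (h : SplA (P * Q)) : SplA Q := by
  obtain ⟨R, hR⟩ := h
  exact (splA_mul R P Q hP hQ hR).2

lemma splA_root {P : Polynomial ℤ} (h : SplA P) (hd : P.natDegree ≠ 0) :
    ∃ r : ℤ, P.eval r = 0 := by
  obtain ⟨R, hR⟩ := h
  have hcard : Multiset.card R ≠ 0 := by
    rw [← natDegree_prodXsubC R, ← hR]; exact hd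
  obtain ⟨r, hr⟩ := Multiset.exists_mem_of_ne_zero (by simpa using hcard)
  refine ⟨r, ?_⟩
  rw [hR, eval_multiset_prod]
  apply Multiset.prod_eq_zero
  rw [Multiset.map_map]
  have : (0 : ℤ) = eval r (X - C r) := by simp
  rw [this]
  exact Multiset.mem_map_of_mem _ hr

lemma splA_eval_mem {R : Multiset ℤ} {s : ℤ}
    (h : ((R.map fun r => (X : Polynomial ℤ) - C r).prod).eval s = 0) : s ∈ R := by
  rw [eval_multiset_prod, Multiset.map_map] at h
  rw [Multiset.prod_eq_zero_iff] at h
  obtain ⟨r, hr, hr0⟩ := Multiset.mem_map.mp h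
  simp only [Function.comp_apply, eval_sub, eval_X, eval_C, sub_eq_zero] at hr0
  rwa [← hr0] at hr
lemma split_off : ∀ (S R : Multiset ℤ) (Q : Polynomial ℤ),
    (R.map fun r => (X : Polynomial ℤ) - C r).prod = (S.map fun s => X - C s).prod * Q →
    ∃ R' : Multiset ℤ, R = S + R' ∧ Q = (R'.map fun r => X - C r).prod := by
  intro S
  induction S using Multiset.induction with
  | empty =>
    intro R Q h
    exact ⟨R, by simp, by simpa using h.symm⟩
  | cons s S ih =>
    intro R Q h
    have hmem : s ∈ R := by
      apply splA_eval_mem (s := s)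
      rw [h]
      simp only [Multiset.map_cons, Multiset.prod_cons, eval_mul, eval_sub, eval_X, eval_C,
        sub_self, zero_mul]
    obtain ⟨R₀, hR₀⟩ := Multiset.exists_cons_of_mem hmem
    rw [hR₀] at h
    simp only [Multiset.map_cons, Multiset.prod_cons] at h
    rw [mul_assoc] at h
    have h' := mul_left_cancel₀ (X_sub_C_ne_zero s) h
    obtain ⟨R', h1, h2⟩ := ih R₀ Q h'
    exact ⟨R', by rw [hR₀, h1, Multiset.cons_add], h2⟩

lemma monic_sub_C {P : Polynomial ℤ} (hP : P.Monic) (hd : P.natDegree ≠ 0) (a : ℤ) :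
    (P - C a).Monic := by
  have : degree (-C a) < degree P := by
    apply lt_of_le_of_lt (degree_neg (C a) ▸ degree_C_le)
    exact natDegree_pos_iff_degree_pos.mp (Nat.pos_of_ne_zero hd)
  simpa [sub_eq_add_neg] using hP.add_of_left this

lemma sum_lemma (f : Polynomial ℤ) (hf : f.Monic) (hd : f.natDegree ≠ 0) :
    ∀ (W R : Multiset ℤ),
    (W.map fun w => f - C w).prod = (R.map fun r => X - C r).prod →
    ((R.map fun r => f.eval r).sum = (f.natDegree : ℤ) * W.sum ∧
      ∀ r ∈ R, SplA (f - C (f.eval r))) := by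
  intro W
  induction W using Multiset.induction with
  | empty =>
    intro R h
    simp only [Multiset.map_zero, Multiset.prod_zero] at h
    have : Multiset.card R = 0 := by
      rw [← natDegree_prodXsubC R, ← h, natDegree_one]
    rw [Multiset.card_eq_zero] at this
    subst this
    simp
  | cons w W ih =>
    intro R h
    simp only [Multiset.map_cons, Multiset.prod_cons] at h
    have hfw : (f - C w).Monic := monic_sub_C hf hd w
    have hWm : ((W.map fun w => f - C w).prod).Monic :=
      monic_multiset_prod_of_monic _ _ (fun i _ => monic_sub_C hf hd i)
    have hsplfw : SplA (f - C w) := splA_of_mul_left hfw hWm ⟨R, h⟩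
    obtain ⟨S, hS⟩ := hsplfw
    rw [hS] at h
    obtain ⟨R', hR1, hR2⟩ := split_off S R _ (by rw [h])
    have hcardS : Multiset.card S = f.natDegree := by
      rw [← natDegree_prodXsubC S, ← hS, natDegree_sub_C]
    have hevalS : ∀ s ∈ S, f.eval s = w := by
      intro s hs
      have : (f - C w).eval s = 0 := by
        rw [hS, eval_multiset_prod]
        apply Multiset.prod_eq_zero
        rw [Multiset.map_map]
        have h0 : (0 : ℤ) = eval s (X - C s) := by simp
        rw [h0]
        exact Multiset.mem_map_of_mem _ hs
      simp only [eval_sub, eval_C, sub_eq_zero] at this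
      exact this
    obtain ⟨ihsum, ihspl⟩ := ih R' hR2
    constructor
    · subst hR1
      rw [Multiset.map_add, Multiset.sum_add, ihsum]
      have : (S.map fun r => f.eval r) = S.map (fun _ => w) :=
        Multiset.map_congr rfl hevalS
      rw [this, Multiset.map_const', Multiset.sum_replicate, hcardS, Multiset.sum_cons]
      simp only [nsmul_eq_mul]
      ring
    · intro r hr
      subst hR1
      rcases Multiset.mem_add.mp hr with hrS | hrR'
      · rw [hevalS r hrS]
        exact ⟨S, hS⟩
      · exact ihspl r hrR'
lemma chain_monic_s8 (c : ℕ → ℤ) : ∀ j, (chain c j).Monic ∧ (chain c j).natDegree = 2 ^ j := by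
  intro j
  induction j with
  | zero => exact ⟨monic_X, natDegree_X⟩
  | succ n ih =>
    obtain ⟨hm, hdeg⟩ := ih
    have hsq : ((chain c n) ^ 2).Monic := hm.pow 2
    have hsqdeg : ((chain c n) ^ 2).natDegree = 2 ^ (n + 1) := by
      rw [natDegree_pow, hdeg]; ring
    have hd0 : ((chain c n) ^ 2).natDegree ≠ 0 := by rw [hsqdeg]; positivity
    constructor
    · show ((chain c n) ^ 2 - C (c (n + 1))).Monic
      exact monic_sub_C hsq hd0 _
    · show ((chain c n) ^ 2 - C (c (n + 1))).natDegree = 2 ^ (n + 1)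
      rw [natDegree_sub_C, hsqdeg]

lemma chain_nextCoeff (c : ℕ → ℤ) : ∀ j, (chain c j).nextCoeff = 0 := by
  intro j
  induction j with
  | zero => show (X : Polynomial ℤ).nextCoeff = 0; simp [nextCoeff]
  | succ n ih =>
    show ((chain c n) ^ 2 - C (c (n + 1))).nextCoeff = 0
    obtain ⟨hm, hdeg⟩ := chain_monic_s8 c n
    have hsqdeg : ((chain c n) ^ 2).natDegree = 2 ^ (n + 1) := by
      rw [natDegree_pow, hdeg]; ring
    have hpos : 0 < ((chain c n) ^ 2 - C (c (n + 1))).natDegree := by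
      rw [natDegree_sub_C, hsqdeg]; positivity
    rw [nextCoeff_of_natDegree_pos hpos, natDegree_sub_C, hsqdeg]
    have h1 : 2 ^ (n + 1) - 1 ≠ 0 := by
      have : 2 ≤ 2 ^ (n + 1) := Nat.one_lt_two_pow (by omega)
      omega
    rw [coeff_sub, coeff_C, if_neg h1, sub_zero]
    have h2 : ((chain c n) ^ 2).coeff (2 ^ (n + 1) - 1) = ((chain c n) ^ 2).nextCoeff := by
      rw [nextCoeff_of_natDegree_pos (by rw [hsqdeg]; positivity), hsqdeg]
    rw [h2, sq, hm.nextCoeff_mul hm, ih, add_zero]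

lemma comp_splA (f : Polynomial ℤ) (hf : f.Monic) (hd : f.natDegree ≠ 0) :
    ∀ n (G : Polynomial ℤ), G.Monic → G.natDegree = n → SplA (G.comp f) → SplA G := by
  intro n
  induction n using Nat.strong_induction_on with
  | _ n ih =>
    intro G hG hGdeg hGc
    rcases Nat.eq_zero_or_pos n with h0 | hpos
    · subst h0
      have : G = 1 := hG.natDegree_eq_zero.mp hGdeg
      exact ⟨0, by simp [this]⟩
    · have hcompdeg : (G.comp f).natDegree ≠ 0 := by
        rw [natDegree_comp, hGdeg]
        exact Nat.mul_ne_zero (by omega) hd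
      obtain ⟨r, hr⟩ := splA_root hGc hcompdeg
      rw [eval_comp] at hr
      have hdvd : (X - C (f.eval r)) ∣ G := dvd_iff_isRoot.mpr hr
      obtain ⟨G', hG'⟩ := hdvd
      have hG'm : G'.Monic := (monic_X_sub_C _).of_mul_monic_left (by rwa [← hG'])
      have hG'deg : G'.natDegree = n - 1 := by
        have h2 : G.natDegree = 1 + G'.natDegree := by
          rw [hG', (monic_X_sub_C _).natDegree_mul hG'm, natDegree_X_sub_C]
        omega
      have hGcomp : G.comp f = (f - C (f.eval r)) * G'.comp f := by
        rw [hG', mul_comp, sub_comp, X_comp, C_comp]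
      have hsplG' : SplA (G'.comp f) := by
        apply splA_of_mul_right (monic_sub_C hf hd _) (hG'm.comp hf hd)
        rwa [← hGcomp]
      have := ih (n - 1) (by omega) G' hG'm hG'deg hsplG'
      obtain ⟨S, hS⟩ := this
      exact ⟨f.eval r ::ₘ S, by simp [hG', hS]⟩

def Spl (c : ℕ → ℤ) (i : ℕ) (α : ℤ) : Prop := SplA (chain c i - C α)

lemma chain_succ_sub (c : ℕ → ℤ) (i : ℕ) (α : ℤ) :
    chain c (i + 1) - C α = (chain c i) ^ 2 - C (c (i + 1) + α) := by
  show (chain c i) ^ 2 - C (c (i + 1)) - C α = _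
  rw [C_add]; ring

lemma spl_rule {c : ℕ → ℤ} {i : ℕ} {α : ℤ} (h : Spl c (i + 1) α) :
    ∃ β : ℤ, β ^ 2 = c (i + 1) + α ∧ Spl c i β ∧ Spl c i (-β) := by
  unfold Spl at h
  rw [chain_succ_sub] at h
  obtain ⟨hm, hdeg⟩ := chain_monic_s8 c i
  have hd0 : (chain c i).natDegree ≠ 0 ∨ i = 0 := by
    rcases Nat.eq_zero_or_pos i with h0 | hpos
    · right; exact h0
    · left; rw [hdeg]; positivity
  have hdne : ((chain c i) ^ 2 - C (c (i + 1) + α)).natDegree ≠ 0 := by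
    rw [natDegree_sub_C, natDegree_pow, hdeg]
    positivity
  obtain ⟨r, hr⟩ := splA_root h hdne
  simp only [eval_sub, eval_pow, eval_C, sub_eq_zero] at hr
  refine ⟨(chain c i).eval r, hr, ?_, ?_⟩
  · apply splA_of_mul_left (P := chain c i - C ((chain c i).eval r))
      (Q := chain c i + C ((chain c i).eval r))
    · apply monic_sub_C hm
      rw [hdeg]; positivity
    · have : chain c i + C ((chain c i).eval r) =
          chain c i - C (-(chain c i).eval r) := by rw [C_neg]; ring
      rw [this]
      apply monic_sub_C hm
      rw [hdeg]; positivity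
    · have : (chain c i - C ((chain c i).eval r)) * (chain c i + C ((chain c i).eval r)) =
          (chain c i) ^ 2 - C (((chain c i).eval r) ^ 2) := by
        rw [show C (((chain c i).eval r) ^ 2) = (C ((chain c i).eval r)) ^ 2 by rw [map_pow]]
        ring
      rw [this, hr]
      exact h
  · show SplA (chain c i - C (-(chain c i).eval r))
    rw [C_neg, sub_neg_eq_add]
    apply splA_of_mul_right (P := chain c i - C ((chain c i).eval r))
      (Q := chain c i + C ((chain c i).eval r))
    · apply monic_sub_C hm
      rw [hdeg]; positivity
    · have : chain c i + C ((chain c i).eval r) =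
          chain c i - C (-(chain c i).eval r) := by rw [C_neg]; ring
      rw [this]
      apply monic_sub_C hm
      rw [hdeg]; positivity
    · have : (chain c i - C ((chain c i).eval r)) * (chain c i + C ((chain c i).eval r)) =
          (chain c i) ^ 2 - C (((chain c i).eval r) ^ 2) := by
        rw [show C (((chain c i).eval r) ^ 2) = (C ((chain c i).eval r)) ^ 2 by rw [map_pow]]
        ring
      rw [this, hr]
      exact h

lemma chain_comp (c : ℕ → ℤ) (ℓ t : ℕ) :
    chain c (ℓ + t) = (chain (fun n => c (n + ℓ)) t).comp (chain c ℓ) := by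
  induction t with
  | zero => simp [chain]
  | succ s ih =>
    show chain c (ℓ + s + 1) = ((chain (fun n => c (n + ℓ)) s) ^ 2 - C (c (s + 1 + ℓ))).comp _
    rw [sub_comp, pow_comp, C_comp, ← ih]
    show (chain c (ℓ + s)) ^ 2 - C (c (ℓ + s + 1)) = _
    rw [show s + 1 + ℓ = ℓ + s + 1 from by omega]
lemma crumbles_splA {P : Polynomial ℤ} (h : Crumbles P) (hm : P.Monic) : SplA P := by
  obtain ⟨s, hdeg, hprod⟩ := h
  have hlc : (s.map fun q => q.leadingCoeff).prod = 1 := by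
    rw [← leadingCoeff_multiset_prod, ← hprod]
    exact hm
  have hunit : ∀ q ∈ s, q.leadingCoeff * q.leadingCoeff = 1 := by
    intro q hq
    have hdv : q.leadingCoeff ∣ 1 := by
      rw [← hlc]
      exact Multiset.dvd_prod (Multiset.mem_map_of_mem _ hq)
    rcases Int.isUnit_iff.mp (isUnit_of_dvd_one hdv) with h1 | h1 <;> rw [h1] <;> ring
  have hkey : ∀ q ∈ s, q = C q.leadingCoeff *
      (X - C (-(q.leadingCoeff * q.coeff 0))) := by
    intro q hq
    have hnd : q.natDegree = 1 := natDegree_eq_of_degree_eq_some (hdeg q hq)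
    have heq : q = C (q.coeff 1) * X + C (q.coeff 0) :=
      eq_X_add_C_of_natDegree_le_one (by omega)
    have hlcq : q.leadingCoeff = q.coeff 1 := by
      rw [Polynomial.leadingCoeff, hnd]
    have ha := hunit q hq
    calc q = C (q.coeff 1) * X + C (q.coeff 0) := heq
      _ = C q.leadingCoeff * (X - C (-(q.leadingCoeff * q.coeff 0))) := by
          rw [← hlcq, C_neg, sub_neg_eq_add, mul_add, ← C_mul, ← mul_assoc, ha, one_mul]
  refine ⟨s.map fun q => -(q.leadingCoeff * q.coeff 0), ?_⟩
  rw [hprod]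
  have h1 : s = s.map id := (Multiset.map_id s).symm
  rw [Multiset.map_map]
  calc s.prod = (s.map fun q => C q.leadingCoeff *
      (X - C (-(q.leadingCoeff * q.coeff 0)))).prod := by
        congr 1
        conv_lhs => rw [h1]
        exact Multiset.map_congr rfl (fun q hq => hkey q hq)
    _ = (s.map fun q => C q.leadingCoeff).prod *
        (s.map fun q => X - C (-(q.leadingCoeff * q.coeff 0))).prod := by
        rw [← Multiset.prod_map_mul]
    _ = (s.map fun q => (X : Polynomial ℤ) - C (-(q.leadingCoeff * q.coeff 0))).prod := by
        have : (s.map fun q => C q.leadingCoeff).prod = C ((s.map fun q => q.leadingCoeff).prod) := by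
          rw [map_multiset_prod (C : ℤ →+* Polynomial ℤ), Multiset.map_map]
          rfl
        rw [this, hlc, C_1, one_mul]

lemma symsq {p : ℕ} [Fact p.Prime] (hp2 : p ≠ 2) (S : Finset (ZMod p))
    (hS : ∀ y ∈ S, -y ∈ S) : 2 * (S.image fun y => y * y).card ≤ S.card + 1 := by
  classical
  have hp : p.Prime := Fact.out
  have h2 : (2 : ZMod p) ≠ 0 := by
    intro h
    have h' : ((2 : ℕ) : ZMod p) = 0 := by exact_mod_cast h
    have := (ZMod.natCast_eq_zero_iff 2 p).mp h'
    have := (Nat.prime_dvd_prime_iff_eq hp Nat.prime_two).mp this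
    exact hp2 this
  have hy2 : ∀ y : ZMod p, y ≠ 0 → y ≠ -y := by
    intro y hy h
    apply hy
    have h2y : (2 : ZMod p) * y = 0 := by rw [two_mul]; nth_rewrite 1 [h]; ring
    rcases mul_eq_zero.mp h2y with h' | h'
    · exact absurd h' h2
    · exact h'
  set T := S.erase 0 with hT
  have hTs : ∀ y ∈ T, -y ∈ T := by
    intro y hy
    rw [Finset.mem_erase] at hy ⊢
    exact ⟨by simpa using hy.1, hS y hy.2⟩
  have hfib : T.card = ∑ b ∈ T.image (fun y => y * y),
      (T.filter fun y => y * y = b).card :=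
    Finset.card_eq_sum_card_fiberwise (fun x hx => Finset.mem_image_of_mem _ hx)
  have h2le : ∀ b ∈ T.image (fun y => y * y), 2 ≤ (T.filter fun y => y * y = b).card := by
    intro b hb
    obtain ⟨y, hy, rfl⟩ := Finset.mem_image.mp hb
    have hy0 : y ≠ 0 := (Finset.mem_erase.mp hy).1
    have hsub : ({y, -y} : Finset (ZMod p)) ⊆ T.filter fun z => z * z = y * y := by
      intro z hz
      rcases Finset.mem_insert.mp hz with rfl | hz'
      · exact Finset.mem_filter.mpr ⟨hy, rfl⟩
      · rw [Finset.mem_singleton] at hz'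
        subst hz'
        exact Finset.mem_filter.mpr ⟨hTs y hy, by ring⟩
    calc 2 = ({y, -y} : Finset (ZMod p)).card := (Finset.card_pair (hy2 y hy0)).symm
      _ ≤ _ := Finset.card_le_card hsub
  have hTbound : 2 * (T.image fun y => y * y).card ≤ T.card := by
    rw [hfib]
    calc 2 * (T.image fun y => y * y).card
        = ∑ _b ∈ T.image (fun y => y * y), 2 := by rw [Finset.sum_const, smul_eq_mul]; ring
      _ ≤ _ := Finset.sum_le_sum h2le
  have himg : S.image (fun y => y * y) ⊆ insert 0 (T.image fun y => y * y) := by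
    intro b hb
    obtain ⟨y, hy, rfl⟩ := Finset.mem_image.mp hb
    by_cases hy0 : y = 0
    · subst hy0; simp
    · exact Finset.mem_insert_of_mem
        (Finset.mem_image_of_mem _ (Finset.mem_erase.mpr ⟨hy0, hy⟩))
  by_cases h0 : (0 : ZMod p) ∈ S
  · have hTc : T.card = S.card - 1 := Finset.card_erase_of_mem h0
    have hSpos : 1 ≤ S.card := Finset.card_pos.mpr ⟨0, h0⟩
    have := Finset.card_le_card himg
    have := Finset.card_insert_le (0 : ZMod p) (T.image fun y => y * y)
    omega
  · have hTS : T = S := Finset.erase_eq_of_notMem h0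
    rw [hTS] at hTbound
    omega
lemma spl_zero_exists (c : ℕ → ℤ) (p : ℕ) [NeZero p] (x : ZMod p) :
    ∃ a : ℤ, Spl c 0 a ∧ (a : ZMod p) = x := by
  refine ⟨(ZMod.cast x : ℤ), ?_, ZMod.intCast_zmod_cast x⟩
  show SplA (chain c 0 - C _)
  exact ⟨{(ZMod.cast x : ℤ)}, by simp [chain]⟩

lemma card_le_one {c : ℕ → ℤ} {p : ℕ} (hp : p.Prime) (hp2 : p ≠ 2) :
    ∀ i, Nat.clog 2 p ≤ i → ∀ α α' : ℤ, Spl c i α → Spl c i α' →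
    (α : ZMod p) = (α' : ZMod p) := by
  haveI := Fact.mk hp
  classical
  set E : ℕ → Finset (ZMod p) :=
    fun i => Finset.univ.filter (fun x => ∃ a : ℤ, Spl c i a ∧ (a : ZMod p) = x) with hE
  have hmem : ∀ i x, x ∈ E i ↔ ∃ a : ℤ, Spl c i a ∧ (a : ZMod p) = x := by
    intro i x
    simp [hE]
  have hE0 : (E 0).card = p := by
    have huniv : E 0 = Finset.univ := by
      ext x
      simp only [Finset.mem_univ, iff_true]
      exact (hmem 0 x).mpr (spl_zero_exists c p x)
    rw [huniv, Finset.card_univ, ZMod.card]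
  have hstep : ∀ i, 2 * (E (i + 1)).card ≤ (E i).card + 1 := by
    intro i
    set T := (E i).filter (fun y => -y ∈ E i) with hT
    have hTsym : ∀ y ∈ T, -y ∈ T := by
      intro y hy
      rw [hT, Finset.mem_filter] at hy ⊢
      exact ⟨hy.2, by simpa using hy.1⟩
    have hmap : (E (i + 1)).image (fun x => ((c (i + 1) : ℤ) : ZMod p) + x) ⊆
        T.image (fun y => y * y) := by
      intro z hz
      obtain ⟨x, hx, rfl⟩ := Finset.mem_image.mp hz
      obtain ⟨a, ha, rfl⟩ := (hmem _ _).mp hx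
      obtain ⟨β, hβ, h1, h2⟩ := spl_rule ha
      refine Finset.mem_image.mpr ⟨(β : ZMod p), ?_, ?_⟩
      · rw [hT, Finset.mem_filter]
        refine ⟨(hmem _ _).mpr ⟨β, h1, rfl⟩, (hmem _ _).mpr ⟨-β, h2, by push_cast; ring⟩⟩
      · have := congrArg (fun t : ℤ => (t : ZMod p)) hβ
        push_cast at this
        rw [← this]
        ring
    have hinj : (E (i + 1)).card =
        ((E (i + 1)).image (fun x => ((c (i + 1) : ℤ) : ZMod p) + x)).card :=
      (Finset.card_image_of_injective _ (add_right_injective _)).symm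
    calc 2 * (E (i + 1)).card
        ≤ 2 * (T.image (fun y => y * y)).card := by
          rw [hinj]
          exact Nat.mul_le_mul_left 2 (Finset.card_le_card hmap)
      _ ≤ T.card + 1 := symsq hp2 T hTsym
      _ ≤ (E i).card + 1 := by
          have h := Finset.card_le_card (Finset.filter_subset (fun y => -y ∈ E i) (E i))
          rw [hT]
          omega
  have hdecay : ∀ i, 2 ^ i * ((E i).card - 1) ≤ p - 1 := by
    intro i
    induction i with
    | zero => simp [hE0]
    | succ n ih =>
      have h := hstep n
      have h2 : 2 * ((E (n + 1)).card - 1) ≤ (E n).card - 1 := by omega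
      calc 2 ^ (n + 1) * ((E (n + 1)).card - 1)
          = 2 ^ n * (2 * ((E (n + 1)).card - 1)) := by ring
        _ ≤ 2 ^ n * ((E n).card - 1) := Nat.mul_le_mul_left _ h2
        _ ≤ p - 1 := ih
  intro i hi α α' h h'
  have hcard : (E i).card ≤ 1 := by
    by_contra hgt
    push_neg at hgt
    have h1 : 2 ^ i ≤ 2 ^ i * ((E i).card - 1) :=
      Nat.le_mul_of_pos_right _ (by omega)
    have h2 : p ≤ 2 ^ Nat.clog 2 p := Nat.le_pow_clog (by norm_num) p
    have h3 : 2 ^ Nat.clog 2 p ≤ 2 ^ i := Nat.pow_le_pow_right (by norm_num) hi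
    have h4 := hdecay i
    have h5 : 2 ≤ p := hp.two_le
    omega
  exact Finset.card_le_one.mp hcard _ ((hmem i _).mpr ⟨α, h, rfl⟩)
    _ ((hmem i _).mpr ⟨α', h', rfl⟩)

lemma descent {c : ℕ → ℤ} {p k : ℕ} (hp : p.Prime) (hp2 : p ≠ 2)
    (h0 : Spl c k 0) :
    ∀ d, d ≤ k → Nat.clog 2 p ≤ k - d → ∃ α : ℤ, Spl c (k - d) α ∧ (α : ZMod p) = 0 := by
  haveI := Fact.mk hp
  intro d
  induction d with
  | zero => exact fun _ _ => ⟨0, by simpa using h0, by simp⟩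
  | succ n ih =>
    intro hd hclog
    have hclog' : Nat.clog 2 p ≤ k - n := by omega
    obtain ⟨α, hα, hz⟩ := ih (by omega) hclog'
    have hkn : k - n = (k - (n + 1)) + 1 := by omega
    rw [hkn] at hα
    obtain ⟨β, hβ, h1, h2⟩ := spl_rule hα
    have heq := card_le_one hp hp2 (k - (n + 1)) hclog β (-β) h1 h2
    push_cast at heq
    have h2ne : (2 : ZMod p) ≠ 0 := by
      intro h
      have h' : ((2 : ℕ) : ZMod p) = 0 := by exact_mod_cast h
      have := (ZMod.natCast_eq_zero_iff 2 p).mp h'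
      exact hp2 ((Nat.prime_dvd_prime_iff_eq hp Nat.prime_two).mp this)
    have hβ0 : ((β : ℤ) : ZMod p) = 0 := by
      have h2y : (2 : ZMod p) * (β : ZMod p) = 0 := by
        rw [two_mul]
        nth_rewrite 1 [heq]
        ring
      rcases mul_eq_zero.mp h2y with h' | h'
      · exact absurd h' h2ne
      · exact h'
    exact ⟨β, h1, hβ0⟩
/-- `ν_p(c_j) ≥ 2^(j - ⌈log₂ p⌉)`, phrased as a divisibility (which also covers `c_j = 0`,
where the valuation is `∞`). `⌈log₂ p⌉ = Nat.clog 2 p`. -/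
theorem stmt_8 (k : ℕ) (c : ℕ → ℤ) (hcr : Crumbles (chain c k))
    (p : ℕ) (hp : p.Prime) (hp4 : p % 4 = 3)
    (j : ℕ) (hj : 1 ≤ j) (hjk : j ≤ k) (hple : p ≤ 2 ^ (j - 1)) :
    (p : ℤ) ^ (2 ^ (j - Nat.clog 2 p)) ∣ c j := by
  have hp2 : p ≠ 2 := by omega
  set m := Nat.clog 2 p with hm
  have hmle : m ≤ j - 1 := (Nat.clog_le_iff_le_pow (by norm_num)).mpr hple
  have hmj : m + 1 ≤ j := by omega
  have hcrA : SplA (chain c k) := crumbles_splA hcr (chain_monic_s8 c k).1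
  have hSpl0 : Spl c k 0 := by
    show SplA _
    rw [map_zero, sub_zero]
    exact hcrA
  have hdesc : ∀ i, m ≤ i → i ≤ k → ∃ α : ℤ, Spl c i α ∧ (α : ZMod p) = 0 := by
    intro i him hik
    have h := descent hp hp2 hSpl0 (k - i) (by omega) (by rw [← hm]; omega)
    rwa [show k - (k - i) = i from by omega] at h
  have hV : ∀ i, m ≤ i → i ≤ k → ∀ α, Spl c i α → (p : ℤ) ^ (2 ^ (i - m)) ∣ α := by
    intro i him
    induction i, him using Nat.le_induction with
    | base =>
      intro hmk α hα
      obtain ⟨α₁, h1, hz1⟩ := hdesc m le_rfl hmk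
      have heq := card_le_one hp hp2 m hm.ge α α₁ hα h1
      rw [hz1] at heq
      have hdvd : (p : ℤ) ∣ α := (ZMod.intCast_zmod_eq_zero_iff_dvd α p).mp heq
      simpa [Nat.sub_self] using hdvd
    | succ i hi ih =>
      intro hik α hα
      have hik' : i ≤ k := by omega
      have IH := ih hik'
      have hexp : 2 ^ (i + 1 - m) = 2 ^ (i - m) + 2 ^ (i - m) := by
        rw [show i + 1 - m = (i - m) + 1 from by omega, pow_succ]
        ring
      have hdiff : ∀ a a' : ℤ, Spl c (i + 1) a → Spl c (i + 1) a' →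
          (p : ℤ) ^ (2 ^ (i + 1 - m)) ∣ a - a' := by
        intro a a' ha ha'
        obtain ⟨β, hβ, hb, _⟩ := spl_rule ha
        obtain ⟨β', hβ', hb', _⟩ := spl_rule ha'
        have d1 := IH β hb
        have d2 := IH β' hb'
        have hfac : a - a' = (β - β') * (β + β') := by linear_combination hβ' - hβ
        rw [hfac, hexp, pow_add]
        exact mul_dvd_mul (dvd_sub d1 d2) (dvd_add d1 d2)
      set t := k - (i + 1) with ht
      have hk' : k = (i + 1) + t := by omega
      have hcomp := chain_comp c (i + 1) t
      rw [← hk'] at hcomp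
      set G := chain (fun n => c (n + (i + 1))) t with hGdef
      have hfm := chain_monic_s8 c (i + 1)
      have hfd : (chain c (i + 1)).natDegree ≠ 0 := by rw [hfm.2]; positivity
      have hGspl : SplA G :=
        comp_splA (chain c (i + 1)) hfm.1 hfd G.natDegree G (chain_monic_s8 _ _).1 rfl
          (by rw [← hcomp]; exact hcrA)
      obtain ⟨W, hW⟩ := hGspl
      have hWsum : W.sum = 0 := by
        have h1 : G.nextCoeff = 0 := chain_nextCoeff _ _
        rw [hW, Monic.nextCoeff_multiset_prod _ _ (fun a _ => monic_X_sub_C a)] at h1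
        simp only [nextCoeff_X_sub_C, Multiset.sum_map_neg'] at h1
        exact neg_eq_zero.mp h1
      obtain ⟨R, hR⟩ := id hcrA
      have hprodEq : (W.map fun w => chain c (i + 1) - C w).prod =
          (R.map fun r => X - C r).prod := by
        rw [← hR, hcomp, hW, multiset_prod_comp, Multiset.map_map]
        apply congrArg
        apply Multiset.map_congr rfl
        intro w _
        simp [sub_comp]
      have hsum := sum_lemma (chain c (i + 1)) hfm.1 hfd W R hprodEq
      have hvals : ∀ r ∈ R, Spl c (i + 1) ((chain c (i + 1)).eval r) :=
        fun r hr => hsum.2 r hr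
      have hcardR : Multiset.card R = 2 ^ k := by
        rw [← natDegree_prodXsubC R, ← hR, (chain_monic_s8 c k).2]
      have hsume : (R.map fun r => (chain c (i + 1)).eval r).sum = 0 := by
        rw [hsum.1, hWsum, mul_zero]
      have hdv : (p : ℤ) ^ (2 ^ (i + 1 - m)) ∣
          (R.map fun r => (chain c (i + 1)).eval r - α).sum := by
        apply Multiset.dvd_sum
        intro x hx
        obtain ⟨r, hr, rfl⟩ := Multiset.mem_map.mp hx
        exact hdiff _ _ (hvals r hr) hα
      have hsum2 : (R.map fun r => (chain c (i + 1)).eval r - α).sum =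
          -((2 : ℤ) ^ k * α) := by
        rw [Multiset.sum_map_sub, hsume, Multiset.map_const', Multiset.sum_replicate,
          hcardR, zero_sub, nsmul_eq_mul]
        push_cast
        ring
      rw [hsum2, dvd_neg] at hdv
      have hcop : IsCoprime ((p : ℤ) ^ (2 ^ (i + 1 - m))) ((2 : ℤ) ^ k) := by
        apply IsCoprime.pow
        rw [Int.isCoprime_iff_gcd_eq_one]
        have hnd : ¬ (p ∣ 2) := by
          intro h
          exact hp2 ((Nat.prime_dvd_prime_iff_eq hp Nat.prime_two).mp h)
        have hg : Nat.gcd p 2 = 1 := hp.coprime_iff_not_dvd.mpr hnd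
        show Int.gcd (p : ℤ) 2 = 1
        rw [show ((2 : ℤ)) = ((2 : ℕ) : ℤ) from by norm_cast, Int.gcd_natCast_natCast]
        exact hg
      exact hcop.dvd_of_dvd_mul_left hdv
  obtain ⟨α₀, hα₀, _⟩ := hdesc j (by omega) hjk
  have hα₀' : Spl c ((j - 1) + 1) α₀ := by
    rw [show (j - 1) + 1 = j from by omega]
    exact hα₀
  obtain ⟨β, hβ, hb, _⟩ := spl_rule hα₀'
  rw [show (j - 1) + 1 = j from by omega] at hβ
  have d1 : (p : ℤ) ^ (2 ^ (j - 1 - m)) ∣ β := hV (j - 1) hmle (by omega) β hb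
  have d0 : (p : ℤ) ^ (2 ^ (j - m)) ∣ α₀ := hV j (by omega) hjk α₀ hα₀
  have hsq : (p : ℤ) ^ (2 ^ (j - m)) ∣ β ^ 2 := by
    have h1 : 2 ^ (j - m) = 2 ^ (j - 1 - m) * 2 := by
      rw [show j - m = (j - 1 - m) + 1 from by omega, pow_succ]
    rw [h1, pow_mul]
    exact pow_dvd_pow_of_dvd d1 2
  have hcj : c j = β ^ 2 - α₀ := by linear_combination -hβ
  rw [hcj]
  exact dvd_sub hsq d0
end
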